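/- arXiv:1309.5508 — 6 statements merged into one kernel-verified Lean document; each statement's English description precedes it below -/
import Mathlib

section
/- Let f_i(x) = xᵀA_i x + a_iᵀx + ā_i and g_i(x) = xᵀB_i x + b_iᵀx + b̄_i with A_i, B_i symmetric and g_i > 0 on a set S. Then for all x, x* ∈ S, f_i(x)/g_i(x) - f_i(x*)/g_i(x*) = u_i(x,x*)·[∇(f_i/g_i)(x*)]ᵀ(x - x*) + s_i(x,x*), where u_i(x,x*) = g_i(x*)/g_i(x) and s_i(x,x*) = (1/g_i(x))·(x - x*)ᵀ[A_i - (f_i(x*)/g_i(x*))B_i](x - x*). -/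
/-!
A quadratic function equals its second-order Taylor expansion at any point, with remainder
`(x - x*) ⬝ᵥ M *ᵥ (x - x*)`. Expanding `f` and `g` at `x*` and putting `f x / g x - f x* / g x*`
over the denominator `g x * g x*`, the linear terms assemble into the gradient of `f / g` at `x*`
and the quadratic ones into the remainder of `f - (f x* / g x*) • g`, whose quadratic part is
`A - (f x* / g x*) • B`.
-/

open Matrix

theorem Matrix.IsSymm.dotProduct_mulVec_comm {ι R : Type*} [Fintype ι] [CommSemiring R]
    {M : Matrix ι ι R} (hM : M.IsSymm) (v w : ι → R) : v ⬝ᵥ M *ᵥ w = w ⬝ᵥ M *ᵥ v := by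
  rw [dotProduct_mulVec, ← mulVec_transpose, hM.eq, dotProduct_comm]

theorem Matrix.IsSymm.quadratic_eq_taylor {ι R : Type*} [Fintype ι] [CommRing R]
    {M : Matrix ι ι R} (hM : M.IsSymm) (c : ι → R) (d : R) (x y : ι → R) :
    x ⬝ᵥ M *ᵥ x + c ⬝ᵥ x + d
      = (y ⬝ᵥ M *ᵥ y + c ⬝ᵥ y + d) + ((2 : R) • (M *ᵥ y) + c) ⬝ᵥ (x - y)
        + (x - y) ⬝ᵥ M *ᵥ (x - y) := by
  obtain ⟨h, rfl⟩ : ∃ h, x = y + h := ⟨x - y, by abel⟩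
  simp only [add_sub_cancel_left, mulVec_add, dotProduct_add, add_dotProduct, dotProduct_smul,
    dotProduct_comm _ h, hM.dotProduct_mulVec_comm y h, smul_eq_mul]
  ring

theorem stmt_2 {n : ℕ} (A B : Matrix (Fin n) (Fin n) ℝ) (a b : Fin n → ℝ) (abar bbar : ℝ)
    (hA : A.IsSymm) (hB : B.IsSymm) (S : Set (Fin n → ℝ))
    (f : (Fin n → ℝ) → ℝ) (g : (Fin n → ℝ) → ℝ)
    (hf : ∀ x, f x = x ⬝ᵥ (A *ᵥ x) + a ⬝ᵥ x + abar)
    (hg : ∀ x, g x = x ⬝ᵥ (B *ᵥ x) + b ⬝ᵥ x + bbar)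
    (hgpos : ∀ x ∈ S, 0 < g x) :
    ∀ x ∈ S, ∀ xs ∈ S,
      f x / g x - f xs / g xs
        = (g xs / g x) *
            ((((g xs) ^ 2)⁻¹ •
              ((g xs) • ((2 : ℝ) • (A *ᵥ xs) + a) - (f xs) • ((2 : ℝ) • (B *ᵥ xs) + b))) ⬝ᵥ (x - xs))
          + (1 / g x) * ((x - xs) ⬝ᵥ ((A - (f xs / g xs) • B) *ᵥ (x - xs))) := by
  intro x hx xs hxs
  have hgx_pos := hgpos x hx
  have hgxs_pos := hgpos xs hxs
  set d := x - xs
  have hfx : f x = f xs + ((2 : ℝ) • (A *ᵥ xs) + a) ⬝ᵥ d + d ⬝ᵥ A *ᵥ d := by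
    rw [hf, hf]; exact hA.quadratic_eq_taylor a abar x xs
  have hgx : g x = g xs + ((2 : ℝ) • (B *ᵥ xs) + b) ⬝ᵥ d + d ⬝ᵥ B *ᵥ d := by
    rw [hg, hg]; exact hB.quadratic_eq_taylor b bbar x xs
  rw [hfx]
  rw [hgx] at hgx_pos ⊢
  simp only [smul_dotProduct, sub_dotProduct, sub_mulVec, smul_mulVec, dotProduct_sub,
    dotProduct_smul, smul_eq_mul]
  field_simp
  ring
end

section
/- Under the KKT-type conditions at a feasible x* with convex constraints, if min over feasible x of Z(x,x*) ≥ 0, where Z(x,x*) = (x-x*)ᵀ[Σᵢ (τ_i/g_i(x*))A_i - (τ_i f_i(x*)/g_i(x*)²)B_i](x-x*), then x* is Pareto optimal for the vector quadratic fractional problem. -/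
open Matrix

/-!
If some feasible `x` dominated `x*`, then with `y = x - x*` the weighted sum
`Σᵢ τᵢ (fᵢ(x) gᵢ(x*) - fᵢ(x*) gᵢ(x)) / gᵢ(x*)²` would be negative. Since `fᵢ` and `gᵢ` are
quadratic, each summand equals exactly the first-order term `τᵢ ∇(fᵢ/gᵢ)(x*) ⬝ y` plus the
quadratic term of `Z(x, x*)`. By stationarity the first-order terms add up to `-Σⱼ λⱼ ∇hⱼ(x*) ⬝ y`,
which is nonnegative by convexity, feasibility of `x` and complementary slackness; the quadratic
terms add up to `Z(x, x*) ≥ 0`.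
-/

section QuadraticExpansion

variable {𝕜 ι : Type*} [Fintype ι]

theorem Matrix.IsSymm.dotProduct_mulVec_comm_s5 [CommSemiring 𝕜] {A : Matrix ι ι 𝕜}
    (hA : A.IsSymm) (u v : ι → 𝕜) : u ⬝ᵥ (A *ᵥ v) = v ⬝ᵥ (A *ᵥ u) := by
  rw [dotProduct_mulVec, ← mulVec_transpose, hA.eq, dotProduct_comm]

theorem quadratic_sub_quadratic [CommRing 𝕜] {A : Matrix ι ι 𝕜} (hA : A.IsSymm)
    (a : ι → 𝕜) (α : 𝕜) (x x₀ : ι → 𝕜) :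
    (x ⬝ᵥ (A *ᵥ x) + a ⬝ᵥ x + α) - (x₀ ⬝ᵥ (A *ᵥ x₀) + a ⬝ᵥ x₀ + α)
      = ((2 : 𝕜) • (A *ᵥ x₀) + a) ⬝ᵥ (x - x₀) + (x - x₀) ⬝ᵥ (A *ᵥ (x - x₀)) := by
  have hswap := hA.dotProduct_mulVec_comm_s5 x₀ x
  simp only [mulVec_sub, dotProduct_sub, sub_dotProduct, add_dotProduct, smul_dotProduct,
    smul_eq_mul, dotProduct_comm (A *ᵥ x₀), dotProduct_comm a]
  linear_combination hswap

theorem mul_sub_mul_div_sq_eq_of_sub_eq [Field 𝕜] {A B : Matrix ι ι 𝕜} {p q y : ι → 𝕜}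
    {F F₀ G G₀ : 𝕜} (hG₀ : G₀ ≠ 0) (hF : F - F₀ = p ⬝ᵥ y + y ⬝ᵥ (A *ᵥ y))
    (hG : G - G₀ = q ⬝ᵥ y + y ⬝ᵥ (B *ᵥ y)) (τ : 𝕜) :
    τ * (F * G₀ - F₀ * G) / G₀ ^ 2
      = (τ • ((G₀ ^ 2)⁻¹ • (G₀ • p - F₀ • q))) ⬝ᵥ y
        + y ⬝ᵥ (((τ / G₀) • A - (τ * F₀ / G₀ ^ 2) • B) *ᵥ y) := by
  have hcross : F * G₀ - F₀ * G = G₀ * (F - F₀) - F₀ * (G - G₀) := by ring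
  rw [hcross, hF, hG]
  simp only [smul_dotProduct, sub_dotProduct, sub_mulVec, smul_mulVec, dotProduct_sub,
    dotProduct_smul, smul_eq_mul]
  field_simp
  ring

end QuadraticExpansion

section Signs

variable {𝕜 : Type*} [Field 𝕜] [LinearOrder 𝕜] [IsStrictOrderedRing 𝕜] {F F₀ G G₀ τ : 𝕜}

theorem mul_sub_mul_div_sq_nonpos (hG : 0 < G) (hG₀ : 0 < G₀) (hτ : 0 ≤ τ)
    (h : F / G ≤ F₀ / G₀) : τ * (F * G₀ - F₀ * G) / G₀ ^ 2 ≤ 0 := by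
  have := (div_le_div_iff₀ hG hG₀).mp h
  exact div_nonpos_of_nonpos_of_nonneg (mul_nonpos_of_nonneg_of_nonpos hτ (by linarith))
    (sq_nonneg _)

theorem mul_sub_mul_div_sq_neg (hG : 0 < G) (hG₀ : 0 < G₀) (hτ : 0 < τ)
    (h : F / G < F₀ / G₀) : τ * (F * G₀ - F₀ * G) / G₀ ^ 2 < 0 := by
  have := (div_lt_div_iff₀ hG hG₀).mp h
  exact div_neg_of_neg_of_pos (mul_neg_of_pos_of_neg hτ (by linarith)) (by positivity)

end Signs

theorem sum_smul_dotProduct_sub_nonpos {𝕜 ι κ : Type*} [Field 𝕜] [LinearOrder 𝕜]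
    [IsStrictOrderedRing 𝕜] [Fintype ι] [Fintype κ] {lam : κ → 𝕜} (hlam : ∀ j, 0 ≤ lam j)
    {h : κ → (ι → 𝕜) → 𝕜} {d : κ → ι → 𝕜} {x x₀ : ι → 𝕜}
    (hsub : ∀ j, d j ⬝ᵥ (x - x₀) ≤ h j x - h j x₀) (hx : ∀ j, h j x ≤ 0)
    (hcomp : ∑ j, lam j * h j x₀ = 0) :
    (∑ j, lam j • d j) ⬝ᵥ (x - x₀) ≤ 0 :=
  calc (∑ j, lam j • d j) ⬝ᵥ (x - x₀)
      = ∑ j, lam j * (d j ⬝ᵥ (x - x₀)) := by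
        simp only [sum_dotProduct, smul_dotProduct, smul_eq_mul]
    _ ≤ ∑ j, lam j * (h j x - h j x₀) :=
        Finset.sum_le_sum fun j _ => mul_le_mul_of_nonneg_left (hsub j) (hlam j)
    _ = ∑ j, lam j * h j x := by simp only [mul_sub, Finset.sum_sub_distrib, hcomp, sub_zero]
    _ ≤ 0 := Finset.sum_nonpos fun j _ => mul_nonpos_of_nonneg_of_nonpos (hlam j) (hx j)

theorem stmt_5_general {n m ℓ : ℕ}
    (A B : Fin m → Matrix (Fin n) (Fin n) ℝ)
    (a b : Fin m → Fin n → ℝ) (abar bbar : Fin m → ℝ)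
    (hA : ∀ i, (A i).IsSymm) (hB : ∀ i, (B i).PosSemidef)
    (f g : Fin m → (Fin n → ℝ) → ℝ)
    (hf : ∀ i x, f i x = x ⬝ᵥ (A i *ᵥ x) + a i ⬝ᵥ x + abar i)
    (hg : ∀ i x, g i x = x ⬝ᵥ (B i *ᵥ x) + b i ⬝ᵥ x + bbar i)
    (hgpos : ∀ i x, 0 < g i x)
    (h : Fin ℓ → (Fin n → ℝ) → ℝ) (hgrad : Fin ℓ → (Fin n → ℝ) → (Fin n → ℝ))
    (hconv : ∀ j x y, h j x - h j y ≥ (hgrad j y) ⬝ᵥ (x - y))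
    (S : Set (Fin n → ℝ)) (hS : S = {x | ∀ j, h j x ≤ 0})
    (xs : Fin n → ℝ)
    (τ : Fin m → ℝ) (lam : Fin ℓ → ℝ)
    (hτ : ∀ i, 0 < τ i) (hlam : ∀ j, 0 ≤ lam j)
    (hstat : ∑ i, τ i •
        (((g i xs) ^ 2)⁻¹ •
          ((g i xs) • ((2 : ℝ) • (A i *ᵥ xs) + a i) - (f i xs) • ((2 : ℝ) • (B i *ᵥ xs) + b i)))
        + ∑ j, lam j • hgrad j xs = 0)
    (hcomp : ∑ j, lam j * h j xs = 0)
    (hkey : ∀ x ∈ S, 0 ≤ (x - xs) ⬝ᵥ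
        ((∑ i, ((τ i / g i xs) • A i - (τ i * f i xs / (g i xs) ^ 2) • B i)) *ᵥ (x - xs))) :
    ¬ ∃ x ∈ S, (∀ i, f i x / g i x ≤ f i xs / g i xs) ∧
        (∃ i, f i x / g i x < f i xs / g i xs) := by
  rintro ⟨x, hxS, hle, i₀, hlt⟩
  have hfeas : ∀ j, h j x ≤ 0 := by rw [hS] at hxS; exact hxS
  have hvar : ∀ i, τ i * (f i x * g i xs - f i xs * g i x) / g i xs ^ 2
      = (τ i • ((g i xs ^ 2)⁻¹ •
          (g i xs • ((2 : ℝ) • (A i *ᵥ xs) + a i) - f i xs • ((2 : ℝ) • (B i *ᵥ xs) + b i))))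
          ⬝ᵥ (x - xs)
        + (x - xs) ⬝ᵥ (((τ i / g i xs) • A i - (τ i * f i xs / g i xs ^ 2) • B i) *ᵥ (x - xs)) :=
    fun i => mul_sub_mul_div_sq_eq_of_sub_eq (hgpos i xs).ne'
      (by rw [hf, hf]; exact quadratic_sub_quadratic (hA i) _ _ _ _)
      (by rw [hg, hg]; exact quadratic_sub_quadratic (isHermitian_iff_isSymm.mp (hB i).1) _ _ _ _)
      (τ i)
  have hneg : ∑ i, τ i * (f i x * g i xs - f i xs * g i x) / g i xs ^ 2 < 0 :=
    Finset.sum_neg'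
      (fun i _ => mul_sub_mul_div_sq_nonpos (hgpos i x) (hgpos i xs) (hτ i).le (hle i))
      ⟨i₀, Finset.mem_univ _, mul_sub_mul_div_sq_neg (hgpos i₀ x) (hgpos i₀ xs) (hτ i₀) hlt⟩
  have hkkt := sum_smul_dotProduct_sub_nonpos hlam (fun j => hconv j x xs) hfeas hcomp
  rw [Finset.sum_congr rfl fun i _ => hvar i, Finset.sum_add_distrib, ← sum_dotProduct,
    eq_neg_of_add_eq_zero_left hstat, neg_dotProduct, ← dotProduct_sum, ← sum_mulVec] at hneg
  linarith [hkey x hxS]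

theorem stmt_5 {n m ℓ : ℕ}
    (A B : Fin m → Matrix (Fin n) (Fin n) ℝ)
    (a b : Fin m → Fin n → ℝ) (abar bbar : Fin m → ℝ)
    (hA : ∀ i, (A i).IsSymm) (hB : ∀ i, (B i).PosSemidef)
    (f g : Fin m → (Fin n → ℝ) → ℝ)
    (hf : ∀ i x, f i x = x ⬝ᵥ (A i *ᵥ x) + a i ⬝ᵥ x + abar i)
    (hg : ∀ i x, g i x = x ⬝ᵥ (B i *ᵥ x) + b i ⬝ᵥ x + bbar i)
    (hgpos : ∀ i x, 0 < g i x)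
    (h : Fin ℓ → (Fin n → ℝ) → ℝ) (hgrad : Fin ℓ → (Fin n → ℝ) → (Fin n → ℝ))
    (hconv : ∀ j x y, h j x - h j y ≥ (hgrad j y) ⬝ᵥ (x - y))
    (S : Set (Fin n → ℝ)) (hS : S = {x | ∀ j, h j x ≤ 0})
    (xs : Fin n → ℝ) (hxs : xs ∈ S)
    (τ : Fin m → ℝ) (lam : Fin ℓ → ℝ)
    (hτ : ∀ i, 0 < τ i) (hlam : ∀ j, 0 ≤ lam j)
    (hstat : ∑ i, τ i •
        (((g i xs) ^ 2)⁻¹ •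
          ((g i xs) • ((2 : ℝ) • (A i *ᵥ xs) + a i) - (f i xs) • ((2 : ℝ) • (B i *ᵥ xs) + b i)))
        + ∑ j, lam j • hgrad j xs = 0)
    (hcomp : ∑ j, lam j * h j xs = 0)
    (hkey : ∀ x ∈ S, 0 ≤ (x - xs) ⬝ᵥ
        ((∑ i, ((τ i / g i xs) • A i - (τ i * f i xs / (g i xs) ^ 2) • B i)) *ᵥ (x - xs))) :
    ¬ ∃ x ∈ S, (∀ i, f i x / g i x ≤ f i xs / g i xs) ∧
        (∃ i, f i x / g i x < f i xs / g i xs) :=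
  stmt_5_general A B a b abar bbar hA hB f g hf hg hgpos h hgrad hconv S hS xs τ lam hτ hlam hstat
    hcomp hkey
end

section
/- Under the KKT-type conditions at a feasible x* with convex constraints, if for all feasible x and all i ∈ {1,…,m}, k ∈ {1,…,n} one has μ_k^{A_i}·(τ_i/g_i(x*))⟨x-x*, p_i^k⟩² ≥ μ_k^{B_i}·(τ_i f_i(x*)/g_i(x*)²)⟨x-x*, q_i^k⟩², where (μ_k^{A_i}, p_i^k) and (μ_k^{B_i}, q_i^k) are orthonormal eigenpairs of A_i and B_i respectively, then x* is a Pareto optimal solution of the vector quadratic fractional problem. -/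
/-!
If some feasible `x` Pareto-dominated `x*`, every weighted gap
`τᵢ (fᵢ x / gᵢ x* - fᵢ x* · gᵢ x / (gᵢ x*)²) = τᵢ (gᵢ x / gᵢ x*) (fᵢ x / gᵢ x - fᵢ x* / gᵢ x*)`
would be `≤ 0`, one of them `< 0`. But expanding the quadratics `fᵢ`, `gᵢ` at `x*` splits each gap
into the gradient of `τᵢ fᵢ / gᵢ` at `x*` paired with `x - x*`, plus a quadratic form in `x - x*`.
By stationarity, the subgradient inequalities for the `hⱼ` and complementarity the linear parts
sum to something `≥ 0`; by the spectral decompositions, the eigenpair hypothesis makes each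
quadratic part `≥ 0`.
-/

open Matrix

section QuadraticForms

variable {ι κ R : Type*} [Fintype ι] [CommRing R]

lemma dotProduct_sum_smul_vecMulVec_mulVec [Fintype κ] (μ : κ → R) (p : κ → ι → R)
    (d : ι → R) :
    d ⬝ᵥ ((∑ k, μ k • vecMulVec (p k) (p k)) *ᵥ d) = ∑ k, μ k * (d ⬝ᵥ p k) ^ 2 := by
  simp only [sum_mulVec, dotProduct_sum, smul_mulVec, vecMulVec_mulVec, op_smul_eq_smul,
    dotProduct_smul, smul_eq_mul, dotProduct_comm (p _) d]
  ring_nf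

lemma Matrix.IsSymm.quadratic_apply_eq {M : Matrix ι ι R} (hM : M.IsSymm) {c : ι → R} {c₀ : R}
    {F : (ι → R) → R} (hF : ∀ x, F x = x ⬝ᵥ (M *ᵥ x) + c ⬝ᵥ x + c₀) (x y : ι → R) :
    F y = F x + ((2 : R) • (M *ᵥ x) + c) ⬝ᵥ (y - x) + (y - x) ⬝ᵥ (M *ᵥ (y - x)) := by
  obtain ⟨d, rfl⟩ : ∃ d, y = x + d := ⟨y - x, (add_sub_cancel x y).symm⟩
  rw [add_sub_cancel_left]
  have hcross : x ⬝ᵥ (M *ᵥ d) = (M *ᵥ x) ⬝ᵥ d := by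
    rw [dotProduct_mulVec, ← mulVec_transpose, hM.eq, dotProduct_comm]
  simp only [hF, mulVec_add, dotProduct_add, add_dotProduct, smul_dotProduct, hcross,
    dotProduct_comm d (M *ᵥ x), smul_eq_mul]
  ring

end QuadraticForms

section Ordered

variable {ι κ J R : Type*} [Fintype ι] [CommRing R] [LinearOrder R] [IsStrictOrderedRing R]

lemma mul_dotProduct_mulVec_le_of_spectral [Fintype κ] {s t : R} {μA μB : κ → R}
    {p q : κ → ι → R} {d : ι → R}
    (h : ∀ k, μB k * (t * (d ⬝ᵥ q k) ^ 2) ≤ μA k * (s * (d ⬝ᵥ p k) ^ 2)) :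
    t * (d ⬝ᵥ ((∑ k, μB k • vecMulVec (q k) (q k)) *ᵥ d)) ≤
      s * (d ⬝ᵥ ((∑ k, μA k • vecMulVec (p k) (p k)) *ᵥ d)) := by
  simp only [dotProduct_sum_smul_vecMulVec_mulVec, Finset.mul_sum]
  exact Finset.sum_le_sum fun k _ => by simpa only [mul_left_comm] using h k

lemma dotProduct_sub_nonneg_of_kkt [Fintype J] {grad : J → ι → R} {lam c c₀ : J → R}
    {w x x₀ : ι → R} (hsub : ∀ j, grad j ⬝ᵥ (x - x₀) ≤ c j - c₀ j) (hc : ∀ j, c j ≤ 0)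
    (hlam : ∀ j, 0 ≤ lam j) (hcomp : ∑ j, lam j * c₀ j = 0)
    (hw : w + ∑ j, lam j • grad j = 0) :
    0 ≤ w ⬝ᵥ (x - x₀) := by
  rw [eq_neg_of_add_eq_zero_left hw]
  calc 0 ≤ -∑ j, lam j * c j :=
        neg_nonneg.2 (Finset.sum_nonpos fun j _ => mul_nonpos_of_nonneg_of_nonpos (hlam j) (hc j))
    _ = -∑ j, lam j * (c j - c₀ j) := by
        simp only [mul_sub, Finset.sum_sub_distrib, hcomp, sub_zero]
    _ ≤ -∑ j, lam j * (grad j ⬝ᵥ (x - x₀)) :=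
        neg_le_neg (Finset.sum_le_sum fun j _ => mul_le_mul_of_nonneg_left (hsub j) (hlam j))
    _ = (-∑ j, lam j • grad j) ⬝ᵥ (x - x₀) := by
        simp only [neg_dotProduct, sum_dotProduct, smul_dotProduct, smul_eq_mul]

end Ordered

section Fractional

variable {ι K : Type*} [Fintype ι] [Field K]

lemma div_sub_mul_div_sq_eq {F F₀ G G₀ : K} (hG : G ≠ 0) (hG₀ : G₀ ≠ 0) :
    F / G₀ - F₀ * G / G₀ ^ 2 = G / G₀ * (F / G - F₀ / G₀) := by
  field_simp

lemma mul_div_sub_mul_div_sq_eq_dotProduct_add {τ F F₀ G G₀ QF QG : K} {α β d : ι → K}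
    (hG₀ : G₀ ≠ 0) (hF : F = F₀ + α ⬝ᵥ d + QF) (hG : G = G₀ + β ⬝ᵥ d + QG) :
    τ * (F / G₀ - F₀ * G / G₀ ^ 2) =
      (τ • (G₀ ^ 2)⁻¹ • (G₀ • α - F₀ • β)) ⬝ᵥ d + (τ / G₀ * QF - τ * F₀ / G₀ ^ 2 * QG) := by
  simp only [hF, hG, smul_dotProduct, sub_dotProduct, smul_eq_mul]
  field_simp
  ring

end Fractional

theorem stmt_8_general {n m ℓ : ℕ}
    (A B : Fin m → Matrix (Fin n) (Fin n) ℝ)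
    (a b : Fin m → Fin n → ℝ) (abar bbar : Fin m → ℝ)
    (hA : ∀ i, (A i).IsSymm) (hB : ∀ i, (B i).PosSemidef)
    (f g : Fin m → (Fin n → ℝ) → ℝ)
    (hf : ∀ i x, f i x = x ⬝ᵥ (A i *ᵥ x) + a i ⬝ᵥ x + abar i)
    (hg : ∀ i x, g i x = x ⬝ᵥ (B i *ᵥ x) + b i ⬝ᵥ x + bbar i)
    (hgpos : ∀ i x, 0 < g i x)
    (h : Fin ℓ → (Fin n → ℝ) → ℝ) (hgrad : Fin ℓ → (Fin n → ℝ) → (Fin n → ℝ))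
    (hconv : ∀ j x y, h j x - h j y ≥ (hgrad j y) ⬝ᵥ (x - y))
    (S : Set (Fin n → ℝ)) (hS : S = {x | ∀ j, h j x ≤ 0})
    (xs : Fin n → ℝ)
    (τ : Fin m → ℝ) (lam : Fin ℓ → ℝ)
    (hτ : ∀ i, 0 < τ i) (hlam : ∀ j, 0 ≤ lam j)
    (hstat : ∑ i, τ i •
        (((g i xs) ^ 2)⁻¹ •
          ((g i xs) • ((2 : ℝ) • (A i *ᵥ xs) + a i) - (f i xs) • ((2 : ℝ) • (B i *ᵥ xs) + b i)))
        + ∑ j, lam j • hgrad j xs = 0)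
    (hcomp : ∑ j, lam j * h j xs = 0)
    (p q : Fin m → Fin n → (Fin n → ℝ)) (μA μB : Fin m → Fin n → ℝ)
    (hdecA : ∀ i, A i = ∑ k, μA i k • Matrix.vecMulVec (p i k) (p i k))
    (hdecB : ∀ i, B i = ∑ k, μB i k • Matrix.vecMulVec (q i k) (q i k))
    (hkey : ∀ x ∈ S, ∀ i k,
        μA i k * ((τ i / g i xs) * ((x - xs) ⬝ᵥ p i k) ^ 2)
          ≥ μB i k * ((τ i * f i xs / (g i xs) ^ 2) * ((x - xs) ⬝ᵥ q i k) ^ 2)) :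
    ¬ ∃ x ∈ S, (∀ i, f i x / g i x ≤ f i xs / g i xs) ∧
        (∃ i, f i x / g i x < f i xs / g i xs) := by
  rintro ⟨x, hxS, hle, i₀, hlt⟩
  set v : Fin m → Fin n → ℝ := fun i => τ i • ((g i xs) ^ 2)⁻¹ •
    ((g i xs) • ((2 : ℝ) • (A i *ᵥ xs) + a i) - (f i xs) • ((2 : ℝ) • (B i *ᵥ xs) + b i))
  set Q : Fin m → ℝ := fun i => τ i / g i xs * ((x - xs) ⬝ᵥ (A i *ᵥ (x - xs))) -
    τ i * f i xs / g i xs ^ 2 * ((x - xs) ⬝ᵥ (B i *ᵥ (x - xs)))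
  set gap : Fin m → ℝ := fun i => τ i * (f i x / g i xs - f i xs * g i x / g i xs ^ 2)
  have hgap_expand : ∀ i, gap i = v i ⬝ᵥ (x - xs) + Q i := fun i =>
    mul_div_sub_mul_div_sq_eq_dotProduct_add (hgpos i xs).ne'
      ((hA i).quadratic_apply_eq (hf i) xs x)
      ((isHermitian_iff_isSymm.1 (hB i).isHermitian).quadratic_apply_eq (hg i) xs x)
  have hv : 0 ≤ (∑ i, v i) ⬝ᵥ (x - xs) := by
    rw [hS] at hxS
    exact dotProduct_sub_nonneg_of_kkt (fun j => hconv j x xs) hxS hlam hcomp hstat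
  have hQ : ∀ i, 0 ≤ Q i := fun i => sub_nonneg.2 <| by
    rw [hdecA i, hdecB i]
    exact mul_dotProduct_mulVec_le_of_spectral (hkey x hxS i)
  have hgap_nonneg : 0 ≤ ∑ i, gap i := by
    rw [Finset.sum_congr rfl fun i _ => hgap_expand i, Finset.sum_add_distrib, ← sum_dotProduct]
    exact add_nonneg hv (Finset.sum_nonneg fun i _ => hQ i)
  have hgap_eq : ∀ i, gap i = τ i * (g i x / g i xs) * (f i x / g i x - f i xs / g i xs) :=
    fun i => by rw [mul_assoc, ← div_sub_mul_div_sq_eq (hgpos i x).ne' (hgpos i xs).ne']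
  have hweight : ∀ i, 0 < τ i * (g i x / g i xs) := fun i =>
    mul_pos (hτ i) (div_pos (hgpos i x) (hgpos i xs))
  refine hgap_nonneg.not_gt (Finset.sum_neg' (fun i _ => ?_) ⟨i₀, Finset.mem_univ _, ?_⟩)
  · exact hgap_eq i ▸ mul_nonpos_of_nonneg_of_nonpos (hweight i).le (sub_nonpos.2 (hle i))
  · exact hgap_eq i₀ ▸ mul_neg_of_pos_of_neg (hweight i₀) (sub_neg.2 hlt)

theorem stmt_8 {n m ℓ : ℕ}
    (A B : Fin m → Matrix (Fin n) (Fin n) ℝ)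
    (a b : Fin m → Fin n → ℝ) (abar bbar : Fin m → ℝ)
    (hA : ∀ i, (A i).IsSymm) (hB : ∀ i, (B i).PosSemidef)
    (f g : Fin m → (Fin n → ℝ) → ℝ)
    (hf : ∀ i x, f i x = x ⬝ᵥ (A i *ᵥ x) + a i ⬝ᵥ x + abar i)
    (hg : ∀ i x, g i x = x ⬝ᵥ (B i *ᵥ x) + b i ⬝ᵥ x + bbar i)
    (hgpos : ∀ i x, 0 < g i x)
    (h : Fin ℓ → (Fin n → ℝ) → ℝ) (hgrad : Fin ℓ → (Fin n → ℝ) → (Fin n → ℝ))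
    (hconv : ∀ j x y, h j x - h j y ≥ (hgrad j y) ⬝ᵥ (x - y))
    (S : Set (Fin n → ℝ)) (hS : S = {x | ∀ j, h j x ≤ 0})
    (xs : Fin n → ℝ) (hxs : xs ∈ S)
    (τ : Fin m → ℝ) (lam : Fin ℓ → ℝ)
    (hτ : ∀ i, 0 < τ i) (hlam : ∀ j, 0 ≤ lam j)
    (hstat : ∑ i, τ i •
        (((g i xs) ^ 2)⁻¹ •
          ((g i xs) • ((2 : ℝ) • (A i *ᵥ xs) + a i) - (f i xs) • ((2 : ℝ) • (B i *ᵥ xs) + b i)))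
        + ∑ j, lam j • hgrad j xs = 0)
    (hcomp : ∑ j, lam j * h j xs = 0)
    (p q : Fin m → Fin n → (Fin n → ℝ)) (μA μB : Fin m → Fin n → ℝ)
    (horthp : ∀ i k l, p i k ⬝ᵥ p i l = if k = l then 1 else 0)
    (horthq : ∀ i k l, q i k ⬝ᵥ q i l = if k = l then 1 else 0)
    (hdecA : ∀ i, A i = ∑ k, μA i k • Matrix.vecMulVec (p i k) (p i k))
    (hdecB : ∀ i, B i = ∑ k, μB i k • Matrix.vecMulVec (q i k) (q i k))
    (hkey : ∀ x ∈ S, ∀ i k,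
        μA i k * ((τ i / g i xs) * ((x - xs) ⬝ᵥ p i k) ^ 2)
          ≥ μB i k * ((τ i * f i xs / (g i xs) ^ 2) * ((x - xs) ⬝ᵥ q i k) ^ 2)) :
    ¬ ∃ x ∈ S, (∀ i, f i x / g i x ≤ f i xs / g i xs) ∧
        (∃ i, f i x / g i x < f i xs / g i xs) :=
  stmt_8_general A B a b abar bbar hA hB f g hf hg hgpos h hgrad hconv S hS xs τ lam hτ hlam hstat
    hcomp p q μA μB hdecA hdecB hkey
end

section
/- A feasible point x* is Pareto optimal for the vector quadratic fractional problem (VQFP) if and only if x* is Pareto optimal for the associated parametric problem (VQFP)_{x*} whose i-th objective is x ↦ f_i(x) - (f_i(x*)/g_i(x*))·g_i(x), over the same feasible set. -/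
/-! Multiplying `x ↦ f x / g x - c` by `g x > 0` turns the fractional objective into
`f - c • g`; with `c = f xs / g xs` both vanish at `xs`, so at every feasible point the two
objectives differ from their values at `xs` by a positive factor, which Pareto optimality
cannot see. -/

/-- Pareto optimality of `xs` for vector objective `F` over feasible set `S`:
no feasible `x` with `F x ≤ F xs` componentwise and `F x ≠ F xs`. -/
def ParetoOpt {α : Type*} {m : ℕ} (S : Set α) (F : α → Fin m → ℝ) (xs : α) : Prop :=
  ¬ ∃ x ∈ S, (∀ i, F x i ≤ F xs i) ∧ F x ≠ F xs

lemma paretoOpt_iff_of_sub_eq_mul {α : Type*} {m : ℕ} {S : Set α} {F G : α → Fin m → ℝ}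
    {xs : α} (w : α → Fin m → ℝ) (hw : ∀ x ∈ S, ∀ i, 0 < w x i)
    (hFG : ∀ x ∈ S, ∀ i, G x i - G xs i = w x i * (F x i - F xs i)) :
    ParetoOpt S F xs ↔ ParetoOpt S G xs := by
  have hle : ∀ x ∈ S, ∀ i, F x i ≤ F xs i ↔ G x i ≤ G xs i := fun x hx i => by
    rw [← sub_nonpos, ← sub_nonpos (a := G x i), hFG x hx i]
    simpa only [mul_zero] using (mul_le_mul_iff_of_pos_left (hw x hx i) (c := 0)).symm
  have hne : ∀ x ∈ S, F x ≠ F xs ↔ G x ≠ G xs := fun x hx => by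
    refine not_congr ⟨fun h => funext fun i => ?_, fun h => funext fun i => ?_⟩
    · rw [← sub_eq_zero, hFG x hx i, congrFun h i, sub_self, mul_zero]
    · have := hFG x hx i
      rw [congrFun h i, sub_self, eq_comm, mul_eq_zero, sub_eq_zero] at this
      exact this.resolve_left (hw x hx i).ne'
  unfold ParetoOpt
  refine not_congr ⟨?_, ?_⟩ <;> rintro ⟨x, hx, hdom, hstrict⟩
  · exact ⟨x, hx, fun i => (hle x hx i).1 (hdom i), (hne x hx).1 hstrict⟩
  · exact ⟨x, hx, fun i => (hle x hx i).2 (hdom i), (hne x hx).2 hstrict⟩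

lemma sub_div_mul_sub_eq_mul_sub_div {K : Type*} [Field K] {a b c d : K} (hb : b ≠ 0) (hd : d ≠ 0) :
    a - c / d * b - (c - c / d * d) = b * (a / b - c / d) := by
  field_simp
  ring

theorem stmt_10 {α : Type*} {m : ℕ} (S : Set α)
    (f g : Fin m → α → ℝ) (hgpos : ∀ i, ∀ x ∈ S, 0 < g i x)
    (xs : α) (hxs : xs ∈ S) :
    ParetoOpt S (fun x i => f i x / g i x) xs ↔
      ParetoOpt S (fun x i => f i x - (f i xs / g i xs) * g i x) xs :=
  paretoOpt_iff_of_sub_eq_mul (fun x i => g i x) (fun x hx i => hgpos i x hx) fun x hx i =>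
    sub_div_mul_sub_eq_mul_sub_div (hgpos i x hx).ne' (hgpos i xs hxs).ne'
end

section
/- Let x* be feasible and w ∈ ℝᵐ with w > 0 componentwise. If x* minimizes the weighted scalar function x ↦ Σᵢ w_i (f_i(x) - (f_i(x*)/g_i(x*))g_i(x)) over the feasible set S, then x* is Pareto optimal for the vector fractional problem with objectives f_i/g_i over S. -/
/-!
At `x*` every term `f i x* - (f i x* / g i x*) * g i x*` vanishes, so the minimum of the weighted
parametric sum is `0`. Since `g i x > 0`, a point `x` dominating `x*` satisfies
`f i x ≤ (f i x* / g i x*) * g i x` for every `i`, strictly for some `i`, so with positive weights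
its parametric sum is negative, contradicting minimality.
-/

open Finset

lemma sub_mul_nonpos_of_div_le {a b r : ℝ} (hb : 0 < b) (h : a / b ≤ r) : a - r * b ≤ 0 :=
  sub_nonpos.mpr ((div_le_iff₀ hb).mp h)

lemma sub_mul_neg_of_div_lt {a b r : ℝ} (hb : 0 < b) (h : a / b < r) : a - r * b < 0 :=
  sub_neg.mpr ((div_lt_iff₀ hb).mp h)

lemma sum_mul_sub_mul_neg_of_div_le {ι : Type*} [Fintype ι] {w a b r : ι → ℝ}
    (hw : ∀ i, 0 < w i) (hb : ∀ i, 0 < b i) (hle : ∀ i, a i / b i ≤ r i)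
    (hlt : ∃ j, a j / b j < r j) :
    ∑ i, w i * (a i - r i * b i) < 0 := by
  obtain ⟨j, hj⟩ := hlt
  exact sum_neg' (fun i _ => mul_nonpos_of_nonneg_of_nonpos (hw i).le
      (sub_mul_nonpos_of_div_le (hb i) (hle i)))
    ⟨j, mem_univ j, mul_neg_of_pos_of_neg (hw j) (sub_mul_neg_of_div_lt (hb j) hj)⟩

lemma sum_mul_sub_div_mul_self_eq_zero {ι : Type*} [Fintype ι] {w a b : ι → ℝ}
    (hb : ∀ i, b i ≠ 0) :
    ∑ i, w i * (a i - a i / b i * b i) = 0 :=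
  sum_eq_zero fun i _ => by rw [div_mul_cancel₀ _ (hb i), sub_self, mul_zero]

theorem stmt_11 {α : Type*} {m : ℕ} (S : Set α)
    (f g : Fin m → α → ℝ) (hgpos : ∀ i, ∀ x ∈ S, 0 < g i x)
    (xs : α) (hxs : xs ∈ S)
    (w : Fin m → ℝ) (hw : ∀ i, 0 < w i)
    (hmin : ∀ x ∈ S,
      ∑ i, w i * (f i xs - (f i xs / g i xs) * g i xs)
        ≤ ∑ i, w i * (f i x - (f i xs / g i xs) * g i x)) :
    ¬ ∃ x ∈ S, (∀ i, f i x / g i x ≤ f i xs / g i xs) ∧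
        (∃ i, f i x / g i x < f i xs / g i xs) := by
  rintro ⟨x, hxS, hle, hlt⟩
  have hval_xs : ∑ i, w i * (f i xs - (f i xs / g i xs) * g i xs) = 0 :=
    sum_mul_sub_div_mul_self_eq_zero fun i => (hgpos i xs hxs).ne'
  have hval_x : ∑ i, w i * (f i x - (f i xs / g i xs) * g i x) < 0 :=
    sum_mul_sub_mul_neg_of_div_le hw (fun i => hgpos i x hxS) hle hlt
  linarith [hmin x hxS]
end

section
/- (Weak duality) Let x be feasible for (VQFP) (h_j(x) ≤ 0 for all j, h_j convex differentiable) and let (u, τ, λ) satisfy: u feasible region point with Σᵢ τ_i (∇f_i(u) - (f_i(u)/g_i(u))∇g_i(u)) + Σⱼ λ_j ∇h_j(u) = 0, Σⱼ λ_j h_j(u) ≥ 0, τ > 0, λ ≥ 0. If Σᵢ τ_i [A_i - (f_i(u)/g_i(u))B_i] is positive semidefinite, then it is not the case that f_i(x)/g_i(x) ≤ f_i(u)/g_i(u) for all i with strict inequality for some i. -/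
/-!
Set `ρᵢ = fᵢ(u)/gᵢ(u)` and consider the scalarised Lagrangian `φ = ∑ᵢ τᵢ (fᵢ - ρᵢ gᵢ)`, a
quadratic with Hessian `2 ∑ᵢ τᵢ (Aᵢ - ρᵢ Bᵢ) ⪰ 0` and `φ(u) = 0`. Expanding `φ` around `u`, the
stationarity condition turns the linear term into `-∑ⱼ λⱼ ∇hⱼ(u)⬝(x - u)`, which is nonnegative by
convexity of the `hⱼ`, feasibility of `x` and `∑ⱼ λⱼ hⱼ(u) ≥ 0`; hence `φ(x) ≥ 0`. On the other
hand, if `x` dominated `u` then, since `gᵢ(x) > 0`, every `fᵢ(x) - ρᵢ gᵢ(x) ≤ 0` with one strict,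
so `φ(x) < 0`.
-/

open Matrix

namespace Matrix

variable {n R : Type*} [Fintype n] [CommRing R]

theorem IsSymm.quadratic_sub_quadratic {M : Matrix n n R} (hM : M.IsSymm) (c x u : n → R) :
    (x ⬝ᵥ (M *ᵥ x) + c ⬝ᵥ x) - (u ⬝ᵥ (M *ᵥ u) + c ⬝ᵥ u)
      = ((2 : R) • (M *ᵥ u) + c) ⬝ᵥ (x - u) + (x - u) ⬝ᵥ (M *ᵥ (x - u)) := by
  have hswap : x ⬝ᵥ (M *ᵥ u) = u ⬝ᵥ (M *ᵥ x) := by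
    rw [dotProduct_mulVec, ← mulVec_transpose, hM, dotProduct_comm]
  simp only [mulVec_sub, dotProduct_sub, sub_dotProduct, add_dotProduct, smul_dotProduct,
    smul_eq_mul]
  rw [dotProduct_comm (M *ᵥ u) x, dotProduct_comm (M *ᵥ u) u, hswap]
  ring

theorem quadratic_sub_smul_quadratic_sub {A B : Matrix n n R} (hA : A.IsSymm) (hB : B.IsSymm)
    (a b : n → R) (α β r : R) (x u : n → R) :
    ((x ⬝ᵥ (A *ᵥ x) + a ⬝ᵥ x + α) - r * (x ⬝ᵥ (B *ᵥ x) + b ⬝ᵥ x + β))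
        - ((u ⬝ᵥ (A *ᵥ u) + a ⬝ᵥ u + α) - r * (u ⬝ᵥ (B *ᵥ u) + b ⬝ᵥ u + β))
      = (((2 : R) • (A *ᵥ u) + a) - r • ((2 : R) • (B *ᵥ u) + b)) ⬝ᵥ (x - u)
        + (x - u) ⬝ᵥ ((A - r • B) *ᵥ (x - u)) := by
  have hexp := (hA.sub (hB.smul r)).quadratic_sub_quadratic (a - r • b) x u
  simp only [sub_mulVec, smul_mulVec, dotProduct_sub, dotProduct_smul, sub_dotProduct,
    smul_dotProduct, smul_eq_mul, smul_sub, smul_add, add_dotProduct] at hexp ⊢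
  linear_combination hexp

end Matrix

theorem sum_smul_grad_dotProduct_nonpos {ι n : Type*} [Fintype ι] [Fintype n]
    (h : ι → (n → ℝ) → ℝ) (grad : ι → (n → ℝ) → n → ℝ) (x u : n → ℝ)
    (hconv : ∀ j, grad j u ⬝ᵥ (x - u) ≤ h j x - h j u) (hx : ∀ j, h j x ≤ 0)
    (lam : ι → ℝ) (hlam : ∀ j, 0 ≤ lam j) (hcomp : 0 ≤ ∑ j, lam j * h j u) :
    (∑ j, lam j • grad j u) ⬝ᵥ (x - u) ≤ 0 := by
  have hx' : ∑ j, lam j * h j x ≤ 0 :=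
    Finset.sum_nonpos fun j _ => mul_nonpos_of_nonneg_of_nonpos (hlam j) (hx j)
  calc (∑ j, lam j • grad j u) ⬝ᵥ (x - u)
      = ∑ j, lam j * (grad j u ⬝ᵥ (x - u)) := by simp only [sum_dotProduct, smul_dotProduct,
        smul_eq_mul]
    _ ≤ ∑ j, lam j * (h j x - h j u) :=
        Finset.sum_le_sum fun j _ => mul_le_mul_of_nonneg_left (hconv j) (hlam j)
    _ = ∑ j, lam j * h j x - ∑ j, lam j * h j u := by
        simp only [mul_sub, Finset.sum_sub_distrib]
    _ ≤ 0 := by linarith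

theorem stmt_15_general {n m ℓ : ℕ}
    (A B : Fin m → Matrix (Fin n) (Fin n) ℝ)
    (a b : Fin m → Fin n → ℝ) (abar bbar : Fin m → ℝ)
    (hA : ∀ i, (A i).IsSymm) (hB : ∀ i, (B i).PosSemidef)
    (f g : Fin m → (Fin n → ℝ) → ℝ)
    (hf : ∀ i x, f i x = x ⬝ᵥ (A i *ᵥ x) + a i ⬝ᵥ x + abar i)
    (hg : ∀ i x, g i x = x ⬝ᵥ (B i *ᵥ x) + b i ⬝ᵥ x + bbar i)
    (hgpos : ∀ i x, 0 < g i x)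
    (h : Fin ℓ → (Fin n → ℝ) → ℝ) (hgrad : Fin ℓ → (Fin n → ℝ) → (Fin n → ℝ))
    (hconv : ∀ j x y, h j x - h j y ≥ (hgrad j y) ⬝ᵥ (x - y))
    (x : Fin n → ℝ) (hx : ∀ j, h j x ≤ 0)
    (u : Fin n → ℝ)
    (τ : Fin m → ℝ) (lam : Fin ℓ → ℝ)
    (hτ : ∀ i, 0 < τ i) (hlam : ∀ j, 0 ≤ lam j)
    (hstat : ∑ i, τ i •
        (((2 : ℝ) • (A i *ᵥ u) + a i) - (f i u / g i u) • ((2 : ℝ) • (B i *ᵥ u) + b i))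
        + ∑ j, lam j • hgrad j u = 0)
    (hcomp : 0 ≤ ∑ j, lam j * h j u)
    (hpsd : ∀ v : Fin n → ℝ,
      0 ≤ v ⬝ᵥ ((∑ i, τ i • (A i - (f i u / g i u) • B i)) *ᵥ v)) :
    ¬ ((∀ i, f i x / g i x ≤ f i u / g i u) ∧
        (∃ i, f i x / g i x < f i u / g i u)) := by
  rintro ⟨hle, i₀, hlt⟩
  set ρ : Fin m → ℝ := fun i => f i u / g i u
  set G : Fin m → Fin n → ℝ := fun i =>
    ((2 : ℝ) • (A i *ᵥ u) + a i) - ρ i • ((2 : ℝ) • (B i *ᵥ u) + b i)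
  have hBsymm : ∀ i, (B i).IsSymm := fun i => isHermitian_iff_isSymm.mp (hB i).isHermitian
  have hρu : ∀ i, f i u - ρ i * g i u = 0 := fun i => by
    rw [div_mul_cancel₀ _ (hgpos i u).ne', sub_self]
  have hexpand : ∀ i, f i x - ρ i * g i x
      = G i ⬝ᵥ (x - u) + (x - u) ⬝ᵥ ((A i - ρ i • B i) *ᵥ (x - u)) := fun i => by
    rw [← sub_zero (f i x - _), ← hρu i, hf, hf, hg, hg]
    exact quadratic_sub_smul_quadratic_sub (hA i) (hBsymm i) _ _ _ _ _ x u
  have hφ : ∑ i, τ i * (f i x - ρ i * g i x)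
      = (∑ i, τ i • G i) ⬝ᵥ (x - u) + (x - u) ⬝ᵥ ((∑ i, τ i • (A i - ρ i • B i)) *ᵥ (x - u)) := by
    simp only [hexpand, mul_add, Finset.sum_add_distrib, sum_dotProduct, sum_mulVec,
      dotProduct_sum, smul_dotProduct, smul_mulVec, dotProduct_smul, smul_eq_mul]
  have hφ_neg : ∑ i, τ i * (f i x - ρ i * g i x) < 0 :=
    Finset.sum_neg'
      (fun i _ => mul_nonpos_of_nonneg_of_nonpos (hτ i).le
        (sub_nonpos.mpr ((div_le_iff₀ (hgpos i x)).mp (hle i))))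
      ⟨i₀, Finset.mem_univ _,
        mul_neg_of_pos_of_neg (hτ i₀) (sub_neg.mpr ((div_lt_iff₀ (hgpos i₀ x)).mp hlt))⟩
  have hlin : 0 ≤ (∑ i, τ i • G i) ⬝ᵥ (x - u) := by
    rw [eq_neg_of_add_eq_zero_left hstat, neg_dotProduct, neg_nonneg]
    exact sum_smul_grad_dotProduct_nonpos h hgrad x u (fun j => hconv j x u) hx lam hlam hcomp
  linarith [hpsd (x - u)]

theorem stmt_15 {n m ℓ : ℕ}
    (A B : Fin m → Matrix (Fin n) (Fin n) ℝ)
    (a b : Fin m → Fin n → ℝ) (abar bbar : Fin m → ℝ)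
    (hA : ∀ i, (A i).IsSymm) (hB : ∀ i, (B i).PosSemidef)
    (f g : Fin m → (Fin n → ℝ) → ℝ)
    (hf : ∀ i x, f i x = x ⬝ᵥ (A i *ᵥ x) + a i ⬝ᵥ x + abar i)
    (hg : ∀ i x, g i x = x ⬝ᵥ (B i *ᵥ x) + b i ⬝ᵥ x + bbar i)
    (hgpos : ∀ i x, 0 < g i x)
    (h : Fin ℓ → (Fin n → ℝ) → ℝ) (hgrad : Fin ℓ → (Fin n → ℝ) → (Fin n → ℝ))
    (hconv : ∀ j x y, h j x - h j y ≥ (hgrad j y) ⬝ᵥ (x - y))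
    (x : Fin n → ℝ) (hx : ∀ j, h j x ≤ 0)
    (u : Fin n → ℝ) (hu : ∀ j, h j u ≤ 0)
    (τ : Fin m → ℝ) (lam : Fin ℓ → ℝ)
    (hτ : ∀ i, 0 < τ i) (hlam : ∀ j, 0 ≤ lam j)
    (hstat : ∑ i, τ i •
        (((2 : ℝ) • (A i *ᵥ u) + a i) - (f i u / g i u) • ((2 : ℝ) • (B i *ᵥ u) + b i))
        + ∑ j, lam j • hgrad j u = 0)
    (hcomp : 0 ≤ ∑ j, lam j * h j u)
    (hpsd : ∀ v : Fin n → ℝ,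
      0 ≤ v ⬝ᵥ ((∑ i, τ i • (A i - (f i u / g i u) • B i)) *ᵥ v)) :
    ¬ ((∀ i, f i x / g i x ≤ f i u / g i u) ∧
        (∃ i, f i x / g i x < f i u / g i u)) :=
  stmt_15_general A B a b abar bbar hA hB f g hf hg hgpos h hgrad hconv x hx u τ lam hτ hlam hstat
    hcomp hpsd
end
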